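/- arXiv:2101.06907 — 2 statements merged into one kernel-verified Lean document; each statement's English description precedes it below -/
import Mathlib

section
/- Let X be a real random variable on a probability space with E[|X|^q] < ∞ and E[|X|^q]^{1/q} ≤ (q−1)² · E[X²]^{1/2} for every real q ≥ 2. Let ρ ∈ (0,1) and let t > 0 satisfy t ≥ c(ρ) · E[X²]^{1/2}. Then Pr(|X| ≥ t) ≤ ρ. -/
open MeasureTheory

/-- The exponent `q(ρ)` from the paper's Theorem 1. -/
noncomputable def qFun (ρ : ℝ) : ℝ :=
  if ρ ∈ Set.Ioc (0 : ℝ) (Real.exp (-8)) then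
    (-Real.log ρ + Real.sqrt ((Real.log ρ) ^ 2 - 8 * Real.log ρ)) / 4
  else 2

/-- The constant `c(ρ)` from the paper's Theorem 1:
`c(ρ) = (q(ρ)-1)² exp(2 q(ρ)/(q(ρ)-1))` if `q(ρ) > 2`, and `c(ρ) = 1/√ρ` if `q(ρ) = 2`. -/
noncomputable def cFun (ρ : ℝ) : ℝ :=
  if 2 < qFun ρ then (qFun ρ - 1) ^ 2 * Real.exp (2 * qFun ρ / (qFun ρ - 1))
  else 1 / Real.sqrt ρ

/-- Abstract form of part (b) of the paper's Theorem 1: a random variable satisfying the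
degree-4 hypercontractive moment bounds for every `q ≥ 2` admits the tail estimate
`Pr(|X| ≥ t) ≤ ρ` whenever `t ≥ c(ρ) E[X²]^{1/2}`. -/
theorem stmt_5 {Ω : Type*} [MeasurableSpace Ω] (P : Measure Ω) [IsProbabilityMeasure P]
    (X : Ω → ℝ) (hX : Measurable X)
    (hInt : ∀ q : ℝ, 2 ≤ q → Integrable (fun ω => |X ω| ^ q) P)
    (hmom : ∀ q : ℝ, 2 ≤ q →
      (∫ ω, |X ω| ^ q ∂P) ^ (1 / q)
        ≤ (q - 1) ^ 2 * (∫ ω, (X ω) ^ 2 ∂P) ^ ((1 : ℝ) / 2))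
    (ρ : ℝ) (hρ : ρ ∈ Set.Ioo (0 : ℝ) 1)
    (t : ℝ) (ht : 0 < t)
    (htbd : cFun ρ * (∫ ω, (X ω) ^ 2 ∂P) ^ ((1 : ℝ) / 2) ≤ t) :
    (P {ω | t ≤ |X ω|}).toReal ≤ ρ := by
  set σ : ℝ := (∫ ω, (X ω) ^ 2 ∂P) ^ ((1 : ℝ) / 2) with hσdef
  have hσ0 : 0 ≤ σ := Real.rpow_nonneg (integral_nonneg fun ω => sq_nonneg _) _
  -- Key Markov-type bound
  have key : ∀ q : ℝ, 2 ≤ q →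
      (P {ω | t ≤ |X ω|}).toReal ≤ ((q - 1) ^ 2 * σ / t) ^ q := by
    intro q hq
    have hq0 : 0 < q := by linarith
    have hE0 : 0 ≤ ∫ ω, |X ω| ^ q ∂P :=
      integral_nonneg fun ω => Real.rpow_nonneg (abs_nonneg _) _
    have hE : (∫ ω, |X ω| ^ q ∂P) ≤ ((q - 1) ^ 2 * σ) ^ q := by
      have h1 := hmom q hq
      have h2 : ((∫ ω, |X ω| ^ q ∂P) ^ (1 / q)) ^ q ≤ ((q - 1) ^ 2 * σ) ^ q :=
        Real.rpow_le_rpow (Real.rpow_nonneg hE0 _) h1 hq0.le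
      rwa [← Real.rpow_mul hE0, one_div, inv_mul_cancel₀ hq0.ne', Real.rpow_one] at h2
    have hset : {ω | t ≤ |X ω|} = {ω | t ^ q ≤ |X ω| ^ q} := by
      ext ω
      simp only [Set.mem_setOf_eq]
      exact (Real.rpow_le_rpow_iff ht.le (abs_nonneg _) hq0).symm
    have hmarkov := mul_meas_ge_le_integral_of_nonneg
      (μ := P) (f := fun ω => |X ω| ^ q)
      (Filter.Eventually.of_forall fun ω => Real.rpow_nonneg (abs_nonneg _) _)
      (hInt q hq) (t ^ q)
    have htq : 0 < t ^ q := Real.rpow_pos_of_pos ht q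
    have : (P {ω | t ≤ |X ω|}).toReal ≤ (∫ ω, |X ω| ^ q ∂P) / t ^ q := by
      rw [hset, le_div_iff₀ htq, mul_comm]
      exact hmarkov
    calc (P {ω | t ≤ |X ω|}).toReal ≤ (∫ ω, |X ω| ^ q ∂P) / t ^ q := this
      _ ≤ ((q - 1) ^ 2 * σ) ^ q / t ^ q := by
          apply div_le_div_of_nonneg_right hE htq.le |>.trans_eq rfl
      _ = ((q - 1) ^ 2 * σ / t) ^ q := by
          rw [Real.div_rpow (by positivity) ht.le]
  obtain ⟨hρ0, hρ1⟩ := hρ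
  by_cases hcase : ρ ∈ Set.Ioc (0 : ℝ) (Real.exp (-8))
  · -- q(ρ) > 2 case
    set L : ℝ := Real.log ρ with hL
    have hL8 : L ≤ -8 := by
      have := Real.log_le_log hρ0 hcase.2
      rwa [Real.log_exp] at this
    set s : ℝ := Real.sqrt (L ^ 2 - 8 * L) with hs
    have hs0 : 0 ≤ s := Real.sqrt_nonneg _
    have hs2 : s ^ 2 = L ^ 2 - 8 * L := Real.sq_sqrt (by nlinarith)
    have hqval : qFun ρ = (-L + s) / 4 := by
      rw [qFun, if_pos hcase]
    set q : ℝ := qFun ρ with hqdef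
    have hq4 : 4 * q = -L + s := by rw [hqval]; ring
    have hq2 : 2 < q := by nlinarith [sq_nonneg (s + L)]
    have hq1 : 0 < q - 1 := by linarith
    have hcval : cFun ρ = (q - 1) ^ 2 * Real.exp (2 * q / (q - 1)) := by
      rw [cFun, if_pos hq2]
    have hbase : (q - 1) ^ 2 * σ / t ≤ Real.exp (-(2 * q / (q - 1))) := by
      rw [div_le_iff₀ ht]
      have h1 : (q - 1) ^ 2 * Real.exp (2 * q / (q - 1)) * σ ≤ t := by
        rw [← hcval]; exact htbd
      have hexp : 0 < Real.exp (-(2 * q / (q - 1))) := Real.exp_pos _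
      have hone : Real.exp (2 * q / (q - 1)) * Real.exp (-(2 * q / (q - 1))) = 1 := by
        rw [← Real.exp_add, add_neg_cancel, Real.exp_zero]
      calc (q - 1) ^ 2 * σ
          = ((q - 1) ^ 2 * Real.exp (2 * q / (q - 1)) * σ) * Real.exp (-(2 * q / (q - 1))) := by
            linear_combination (-((q - 1) ^ 2 * σ)) * hone
        _ ≤ t * Real.exp (-(2 * q / (q - 1))) := mul_le_mul_of_nonneg_right h1 hexp.le
        _ = Real.exp (-(2 * q / (q - 1))) * t := mul_comm _ _
    have hρexp : Real.exp (-(2 * q / (q - 1)) * q) ≤ ρ := by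
      have h2 : -(2 * q / (q - 1)) * q ≤ L := by
        rw [neg_mul, neg_le, ← Real.log_exp (-L)]
        have : 2 * q / (q - 1) * q = 2 * q ^ 2 / (q - 1) := by ring
        rw [Real.log_exp]
        rw [this, le_div_iff₀ hq1]
        nlinarith
      calc Real.exp (-(2 * q / (q - 1)) * q) ≤ Real.exp L := Real.exp_le_exp.mpr h2
        _ = ρ := Real.exp_log hρ0
    calc (P {ω | t ≤ |X ω|}).toReal ≤ ((q - 1) ^ 2 * σ / t) ^ q := key q hq2.le
      _ ≤ (Real.exp (-(2 * q / (q - 1)))) ^ q :=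
          Real.rpow_le_rpow (by positivity) hbase (by linarith)
      _ = Real.exp (-(2 * q / (q - 1)) * q) := by rw [← Real.exp_mul]
      _ ≤ ρ := hρexp
  · -- q(ρ) = 2 case
    have hqval : qFun ρ = 2 := by rw [qFun, if_neg hcase]
    have hcval : cFun ρ = 1 / Real.sqrt ρ := by
      rw [cFun, hqval, if_neg (lt_irrefl 2)]
    have hsρ : 0 < Real.sqrt ρ := Real.sqrt_pos.mpr hρ0
    have hσt : σ ≤ t * Real.sqrt ρ := by
      rw [hcval] at htbd
      rw [div_mul_eq_mul_div, one_mul, div_le_iff₀ hsρ] at htbd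
      linarith [htbd]
    have hbase : σ / t ≤ Real.sqrt ρ := by
      rw [div_le_iff₀ ht]; linarith [hσt]
    calc (P {ω | t ≤ |X ω|}).toReal ≤ ((2 - 1) ^ 2 * σ / t) ^ (2 : ℝ) := key 2 le_rfl
      _ = (σ / t) ^ (2 : ℝ) := by norm_num
      _ ≤ (Real.sqrt ρ) ^ (2 : ℝ) :=
          Real.rpow_le_rpow (by positivity) hbase (by norm_num)
      _ = ρ := by
          rw [Real.rpow_two, Real.sq_sqrt hρ0.le]
end

section
/- Let ρ ∈ (exp(−8), 0.00045), let A be a real symmetric m×m matrix, let a ∈ ℝ^m, and let t ∈ ℝ satisfy the moment-inequality-based constraint t ≥ (1/√ρ) · √(‖a‖₂² + ‖A‖_F² + (tr A)²). Then t also satisfies the Bernstein-type-inequality-based constraint t ≥ tr A + 2√(ln(1/ρ)) · √(‖A‖_F² + (1/2)‖a‖₂²) + 2 ln(1/ρ) · s⁺(A). -/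
open scoped Matrix BigOperators

lemma eig_le_frob {m : ℕ} (A : Matrix (Fin m) (Fin m) ℝ) (hA : A.IsHermitian) (i : Fin m) :
    hA.eigenvalues i ≤ Real.sqrt (∑ i, ∑ j, (A i j) ^ 2) := by
  set v : EuclideanSpace ℝ (Fin m) := hA.eigenvectorBasis i with hv
  have hnorm : ∑ j, (v j) ^ 2 = 1 := by
    have h1 : ‖v‖ = 1 := hA.eigenvectorBasis.orthonormal.1 i
    have := EuclideanSpace.norm_eq v
    rw [h1] at this
    have h2 : Real.sqrt (∑ j, ‖v j‖ ^ 2) = 1 := this.symm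
    have h3 : (∑ j, ‖v j‖ ^ 2) = 1 := by
      have := congrArg (· ^ 2) h2
      simpa [Real.sq_sqrt (Finset.sum_nonneg fun j _ => sq_nonneg _)] using this
    simpa [Real.norm_eq_abs, sq_abs] using h3
  have hev : A *ᵥ ⇑v = hA.eigenvalues i • ⇑v := hA.mulVec_eigenvectorBasis i
  set lam := hA.eigenvalues i
  have key : lam ^ 2 ≤ ∑ i, ∑ j, (A i j) ^ 2 := by
    have h4 : ∀ k, (A *ᵥ ⇑v) k = lam * v k := fun k => by rw [hev]; rfl
    have h5 : lam ^ 2 = ∑ k, (lam * v k) ^ 2 := by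
      simp only [mul_pow, ← Finset.mul_sum, hnorm, mul_one]
    rw [h5]
    have h6 : ∀ k, (lam * v k) ^ 2 ≤ ∑ j, (A k j) ^ 2 := by
      intro k
      have := h4 k
      rw [Matrix.mulVec, dotProduct] at this
      calc (lam * v k) ^ 2 = (∑ j, A k j * v j) ^ 2 := by rw [← this]
        _ ≤ (∑ j, (A k j) ^ 2) * ∑ j, (v j) ^ 2 :=
            Finset.sum_mul_sq_le_sq_mul_sq _ _ _
        _ = ∑ j, (A k j) ^ 2 := by rw [hnorm, mul_one]
    exact Finset.sum_le_sum fun k _ => h6 k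
  calc lam ≤ |lam| := le_abs_self _
    _ = Real.sqrt (lam ^ 2) := (Real.sqrt_sq_eq_abs lam).symm
    _ ≤ _ := Real.sqrt_le_sqrt key

/-- Deterministic core of the paper's Theorem 2 (relative tightness): for
`ρ ∈ (exp(-8), 0.00045)`, any `t` feasible for the moment inequality-based constraint
`t ≥ (1/√ρ) √(‖a‖₂² + ‖A‖_F² + (tr A)²)` is also feasible for the Bernstein-type
inequality-based constraint
`t ≥ tr A + 2√(ln(1/ρ)) √(‖A‖_F² + ½‖a‖₂²) + 2 ln(1/ρ) s⁺(A)`,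
where `s⁺(A) = max{λ_max(A), 0}`. -/
theorem stmt_13 (ρ : ℝ) (hρ : ρ ∈ Set.Ioo (Real.exp (-8)) 0.00045) (m : ℕ)
    (A : Matrix (Fin m) (Fin m) ℝ) (hA : A.IsHermitian) (a : Fin m → ℝ)
    (t : ℝ)
    (ht : (1 / Real.sqrt ρ) *
        Real.sqrt ((∑ i, (a i) ^ 2) + (∑ i, ∑ j, (A i j) ^ 2) + (Matrix.trace A) ^ 2) ≤ t) :
    Matrix.trace A +
      2 * Real.sqrt (Real.log (1 / ρ)) *
        Real.sqrt ((∑ i, ∑ j, (A i j) ^ 2) + (1 / 2) * ∑ i, (a i) ^ 2) +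
      2 * Real.log (1 / ρ) * max (⨆ i, hA.eigenvalues i) 0 ≤ t := by
  obtain ⟨hρ1, hρ2⟩ := hρ
  have hρpos : 0 < ρ := lt_trans (Real.exp_pos _) hρ1
  set a2 := ∑ i, (a i) ^ 2 with ha2
  set F := ∑ i, ∑ j, (A i j) ^ 2 with hF
  set T := Matrix.trace A with hT
  have ha2nn : 0 ≤ a2 := Finset.sum_nonneg fun i _ => sq_nonneg _
  have hFnn : 0 ≤ F := Finset.sum_nonneg fun i _ => Finset.sum_nonneg fun j _ => sq_nonneg _
  set N := Real.sqrt (a2 + F + T ^ 2) with hN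
  have hNnn : 0 ≤ N := Real.sqrt_nonneg _
  have hTN : T ≤ N := by
    calc T ≤ |T| := le_abs_self _
      _ = Real.sqrt (T ^ 2) := (Real.sqrt_sq_eq_abs T).symm
      _ ≤ N := Real.sqrt_le_sqrt (by linarith)
  have hmid : Real.sqrt (F + (1/2) * a2) ≤ N :=
    Real.sqrt_le_sqrt (by nlinarith [sq_nonneg T])
  have hsplus : max (⨆ i, hA.eigenvalues i) 0 ≤ N := by
    have hFN : Real.sqrt F ≤ N := Real.sqrt_le_sqrt (by nlinarith [sq_nonneg T])
    refine max_le ?_ (Real.sqrt_nonneg _ |>.trans hFN)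
    rcases Nat.eq_zero_or_pos m with hm | hm
    · subst hm
      rw [Real.iSup_of_isEmpty]
      exact (Real.sqrt_nonneg _).trans hFN
    · have : Nonempty (Fin m) := Fin.pos_iff_nonempty.mp hm
      exact (ciSup_le fun i => eig_le_frob A hA i).trans hFN
  set L := Real.log (1 / ρ) with hL
  have hLpos : 0 < L := by
    rw [hL]
    apply Real.log_pos
    rw [one_div, lt_inv_comm₀ (by norm_num) hρpos]
    -- need 1/ρ > 1 i.e. ρ < 1
    linarith [hρ2]
  have hL8 : L ≤ 8 := by
    rw [hL, one_div, Real.log_inv]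
    have h := Real.log_le_log (Real.exp_pos (-8)) hρ1.le
    rw [Real.log_exp] at h
    linarith
  have hsqL : Real.sqrt L ≤ 3 := by
    calc Real.sqrt L ≤ Real.sqrt 9 := Real.sqrt_le_sqrt (by linarith)
      _ = 3 := by rw [show (9:ℝ) = 3^2 by norm_num, Real.sqrt_sq (by norm_num)]
  have hinv : (23 : ℝ) ≤ 1 / Real.sqrt ρ := by
    rw [le_div_iff₀ (Real.sqrt_pos.mpr hρpos)]
    have h1 : Real.sqrt ρ ≤ Real.sqrt 0.00045 := Real.sqrt_le_sqrt hρ2.le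
    have h2 : Real.sqrt 0.00045 < 1 / 23 := by
      rw [show (1:ℝ)/23 = Real.sqrt ((1/23)^2) by
        rw [Real.sqrt_sq (by norm_num)]]
      exact Real.sqrt_lt_sqrt (by norm_num) (by norm_num)
    nlinarith
  have key : T + 2 * Real.sqrt L * Real.sqrt (F + (1/2) * a2) + 2 * L * max (⨆ i, hA.eigenvalues i) 0 ≤ 23 * N := by
    have h1 : 2 * Real.sqrt L * Real.sqrt (F + (1/2) * a2) ≤ 6 * N := by
      have := Real.sqrt_nonneg L
      have := Real.sqrt_nonneg (F + (1/2)*a2)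
      nlinarith
    have h2 : 2 * L * max (⨆ i, hA.eigenvalues i) 0 ≤ 16 * N := by
      have h0 : (0:ℝ) ≤ max (⨆ i, hA.eigenvalues i) 0 := le_max_right _ _
      nlinarith
    linarith
  have final : (23:ℝ) * N ≤ (1 / Real.sqrt ρ) * N := by nlinarith
  linarith
end
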